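/- Let k be an algebraically closed field of characteristic zero and let F_R(X,Y) ∈ k[X,Y] denote the member of the family of Example 3.3 with parameters (a₀,a₁,a₂) ∈ k³, i.e. with φ(T)=T³+a₂T²+a₁T+a₀. Suppose F(1,1,a₀,a₁,a₂;X,Y) and F(1,1,b₀,b₁,b₂;X,Y) are equivalent under an automorphism θ of k[X,Y] of the special diagonal form θ(X)=uX, θ(Y)=vY with u,v ∈ k*, in the sense that F(1,1,a₀,a₁,a₂; uX, vY) = u^{12}v^{9}·F(1,1,b₀,b₁,b₂; X,Y). Then u = v = 1 and (a₀,a₁,a₂) = (b₀,b₁,b₂). -/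

import Mathlib

/-!
Writing `t = XY`, every monomial of `F_R` is `X^d t^j` with `d ∈ {0,1,2,3}`, except the lone term
`Y`, so its coefficients are coefficients of the four univariate polynomials `φ³`, `φ²(4T+a₂+2)`,
`φ(6T²+(4+3a₂)T+1+a₁+a₂)` and `4T³+(2+3a₂)T²+(a₂+2a₁)T`. The diagonal substitution multiplies the
coefficient of `X^i Y^j` by `u^i v^j`. Comparing the coefficients of `X⁹Y⁷`, `X¹¹Y⁸` and `X²Y²`
gives `u³v² = 1`, `a₂ = uv·b₂` and then `u²v = 1`, so `u = v = 1`; the coefficients of `X¹¹Y⁸`,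
`XY` and `X⁹Y⁶` then recover `a₂`, `a₁` and `a₀` in turn.
-/

/-- The polynomial `F_R = F(1,1,a₀,a₁,a₂;X,Y)` of Example 3.3, with
`φ(T) = T³ + a₂T² + a₁T + a₀`. -/
noncomputable def FR (k : Type) [Field k] (a₀ a₁ a₂ : k) : MvPolynomial (Fin 2) k :=
  let x : MvPolynomial (Fin 2) k := MvPolynomial.X 0
  let y : MvPolynomial (Fin 2) k := MvPolynomial.X 1
  let p : MvPolynomial (Fin 2) k :=
    (x * y) ^ 3 + MvPolynomial.C a₂ * (x * y) ^ 2 + MvPolynomial.C a₁ * (x * y)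
      + MvPolynomial.C a₀
  x ^ 3 * p ^ 3
    + x ^ 2 * p ^ 2 * (4 * (x * y) + MvPolynomial.C a₂ + 2)
    + x * p * (6 * (x * y) ^ 2 + (4 + 3 * MvPolynomial.C a₂) * (x * y)
        + 1 + MvPolynomial.C a₁ + MvPolynomial.C a₂)
    + 4 * (x * y) ^ 3 + (2 + 3 * MvPolynomial.C a₂) * (x * y) ^ 2
    + (MvPolynomial.C a₂ + 2 * MvPolynomial.C a₁) * (x * y) + y

namespace Finsupp

theorem single_add_single_eq_iff {σ : Type*} {x y : σ} (hxy : x ≠ y) {i j i' j' : ℕ} :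
    single x i + single y j = single x i' + single y j' ↔
      i = i' ∧ j = j' := by
  refine ⟨fun h => ⟨?_, ?_⟩, fun ⟨hi, hj⟩ => hi ▸ hj ▸ rfl⟩
  · simpa [hxy, hxy.symm] using DFunLike.congr_fun h x
  · simpa [hxy, hxy.symm] using DFunLike.congr_fun h y

end Finsupp

namespace MvPolynomial

variable {R σ : Type*} [CommSemiring R]

theorem aeval_C_mul_X_monomial (c : σ → R) (m : σ →₀ ℕ) (a : R) :
    aeval (fun i => C (c i) * X i) (monomial m a) =
      monomial m ((m.prod fun i e => c i ^ e) * a) := by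
  rw [aeval_monomial, monomial_eq, algebraMap_eq]
  simp only [mul_pow, Finsupp.prod_mul, ← map_pow, ← map_finsuppProd, C_mul]
  ring

theorem coeff_aeval_C_mul_X (c : σ → R) (p : MvPolynomial σ R) (m : σ →₀ ℕ) :
    coeff m (aeval (fun i => C (c i) * X i) p) = (m.prod fun i e => c i ^ e) * coeff m p := by
  classical
  induction p using induction_on' with
  | monomial n a =>
    rw [aeval_C_mul_X_monomial, coeff_monomial, coeff_monomial]
    split_ifs with h
    · rw [h]
    · rw [mul_zero]
  | add p q hp hq => rw [map_add, coeff_add, coeff_add, hp, hq, mul_add]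

theorem coeff_aeval_C_mul_X_fin_two (u v : R) (p : MvPolynomial (Fin 2) R) (i j : ℕ) :
    coeff (Finsupp.single 0 i + Finsupp.single 1 j)
        (aeval ![C u * X 0, C v * X 1] p : MvPolynomial (Fin 2) R) =
      u ^ i * v ^ j * coeff (Finsupp.single 0 i + Finsupp.single 1 j) p := by
  have hc : (aeval ![C u * X 0, C v * X 1] p : MvPolynomial (Fin 2) R) =
      aeval (fun n => C (![u, v] n) * X n) p := by
    congr 2
    ext1 n
    fin_cases n <;> rfl
  rw [hc, coeff_aeval_C_mul_X, Finsupp.prod_add_index' (by simp) (by simp [pow_add]),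
    Finsupp.prod_single_index (by simp), Finsupp.prod_single_index (by simp)]
  rfl

theorem coeff_X_pow_mul_aeval_X_mul_X {x y : σ} (hxy : x ≠ y) (d : ℕ) (q : Polynomial R)
    (i j : ℕ) :
    coeff (Finsupp.single x i + Finsupp.single y j) (X x ^ d * Polynomial.aeval (X x * X y) q) =
      if i = d + j then q.coeff j else 0 := by
  classical
  induction q using Polynomial.induction_on' with
  | add p q hp hq =>
    rw [map_add, mul_add, coeff_add, hp, hq, Polynomial.coeff_add]
    split_ifs <;> simp
  | monomial n a =>
    have hmon : X x ^ d * Polynomial.aeval (X x * X y) (Polynomial.monomial n a) =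
        monomial (Finsupp.single x (d + n) + Finsupp.single y n) a := by
      rw [Polynomial.aeval_monomial, monomial_eq,
        Finsupp.prod_add_index' (by simp) (by simp [pow_add]),
        Finsupp.prod_single_index (by simp), Finsupp.prod_single_index (by simp), algebraMap_eq]
      ring
    rw [hmon, coeff_monomial]
    simp only [Finsupp.single_add_single_eq_iff hxy, Polynomial.coeff_monomial]
    by_cases hj : n = j
    · subst hj
      simp [eq_comm]
    · simp [hj]

theorem coeff_single_add_single_X_right {x y : σ} (hxy : x ≠ y) (i j : ℕ) :
    coeff (Finsupp.single x i + Finsupp.single y j) (X y : MvPolynomial σ R) =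
      if i = 0 ∧ j = 1 then 1 else 0 := by
  classical
  have h := Finsupp.single_add_single_eq_iff hxy (i := 0) (j := 1) (i' := i) (j' := j)
  rw [Finsupp.single_zero, zero_add] at h
  simp only [coeff_X, h, eq_comm]

end MvPolynomial

namespace FR

open Polynomial

variable {k : Type} [Field k]

noncomputable def phi (a₀ a₁ a₂ : k) : k[X] := X ^ 3 + C a₂ * X ^ 2 + C a₁ * X + C a₀

section

variable (a₀ a₁ a₂ : k)

theorem eq_sum_X_pow_mul_aeval :
    FR k a₀ a₁ a₂ =
      MvPolynomial.X 0 ^ 3 * aeval (MvPolynomial.X 0 * MvPolynomial.X 1) (phi a₀ a₁ a₂ ^ 3)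
      + MvPolynomial.X 0 ^ 2 * aeval (MvPolynomial.X 0 * MvPolynomial.X 1)
          (phi a₀ a₁ a₂ ^ 2 * (4 * X + C a₂ + 2))
      + MvPolynomial.X 0 ^ 1 * aeval (MvPolynomial.X 0 * MvPolynomial.X 1)
          (phi a₀ a₁ a₂ * (6 * X ^ 2 + (4 + 3 * C a₂) * X + 1 + C a₁ + C a₂))
      + MvPolynomial.X 0 ^ 0 * aeval (MvPolynomial.X 0 * MvPolynomial.X 1)
          (4 * X ^ 3 + (2 + 3 * C a₂) * X ^ 2 + (C a₂ + 2 * C a₁) * X)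
      + MvPolynomial.X 1 := by
  simp only [FR, phi, map_add, map_mul, map_pow, map_ofNat, map_one, aeval_X, aeval_C,
    MvPolynomial.algebraMap_eq]
  ring

theorem coeff_single_add_single (i j : ℕ) :
    MvPolynomial.coeff (Finsupp.single 0 i + Finsupp.single 1 j) (FR k a₀ a₁ a₂) =
      (if i = 3 + j then (phi a₀ a₁ a₂ ^ 3).coeff j else 0)
      + (if i = 2 + j then (phi a₀ a₁ a₂ ^ 2 * (4 * X + C a₂ + 2)).coeff j else 0)
      + (if i = 1 + j then
          (phi a₀ a₁ a₂ * (6 * X ^ 2 + (4 + 3 * C a₂) * X + 1 + C a₁ + C a₂)).coeff j else 0)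
      + (if i = 0 + j then
          (4 * X ^ 3 + (2 + 3 * C a₂) * X ^ 2 + (C a₂ + 2 * C a₁) * X).coeff j else 0)
      + (if i = 0 ∧ j = 1 then 1 else 0) := by
  have hxy : (0 : Fin 2) ≠ 1 := by decide
  simp only [eq_sum_X_pow_mul_aeval, MvPolynomial.coeff_add,
    MvPolynomial.coeff_X_pow_mul_aeval_X_mul_X hxy,
    MvPolynomial.coeff_single_add_single_X_right hxy]

theorem coeff_11_8 :
    MvPolynomial.coeff (Finsupp.single 0 11 + Finsupp.single 1 8) (FR k a₀ a₁ a₂) = 3 * a₂ := by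
  rw [coeff_single_add_single, phi]
  ring_nf
  simp [coeff_X_pow, coeff_X, coeff_C, ← C_mul, ← C_pow, -map_pow, -map_mul]

theorem coeff_9_7 :
    MvPolynomial.coeff (Finsupp.single 0 9 + Finsupp.single 1 7) (FR k a₀ a₁ a₂) = 4 := by
  rw [coeff_single_add_single, phi]
  ring_nf
  simp [coeff_X_pow, coeff_X, coeff_C, ← C_mul, ← C_pow, -map_pow, -map_mul]

theorem coeff_9_6 :
    MvPolynomial.coeff (Finsupp.single 0 9 + Finsupp.single 1 6) (FR k a₀ a₁ a₂) =
      a₂ ^ 3 + 6 * a₁ * a₂ + 3 * a₀ := by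
  rw [coeff_single_add_single, phi]
  ring_nf
  simp [coeff_X_pow, coeff_X, coeff_C, ← C_mul, ← C_pow, -map_pow, -map_mul]

theorem coeff_2_2 :
    MvPolynomial.coeff (Finsupp.single 0 2 + Finsupp.single 1 2) (FR k a₀ a₁ a₂) =
      2 + 3 * a₂ := by
  rw [coeff_single_add_single]
  simp [coeff_mul_X_pow']

theorem coeff_1_1 :
    MvPolynomial.coeff (Finsupp.single 0 1 + Finsupp.single 1 1) (FR k a₀ a₁ a₂) =
      a₂ + 2 * a₁ := by
  rw [coeff_single_add_single]
  simp [coeff_mul_X_pow']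

end

variable {a₀ a₁ a₂ b₀ b₁ b₂ : k}

theorem params_eq_of_eq [CharZero k] (h : FR k a₀ a₁ a₂ = FR k b₀ b₁ b₂) :
    a₀ = b₀ ∧ a₁ = b₁ ∧ a₂ = b₂ := by
  have e11_8 := congrArg (MvPolynomial.coeff (Finsupp.single 0 11 + Finsupp.single 1 8)) h
  have e1_1 := congrArg (MvPolynomial.coeff (Finsupp.single 0 1 + Finsupp.single 1 1)) h
  have e9_6 := congrArg (MvPolynomial.coeff (Finsupp.single 0 9 + Finsupp.single 1 6)) h
  rw [coeff_11_8, coeff_11_8] at e11_8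
  rw [coeff_1_1, coeff_1_1] at e1_1
  rw [coeff_9_6, coeff_9_6] at e9_6
  have h₂ : a₂ = b₂ := by linear_combination e11_8 / 3
  have h₁ : a₁ = b₁ := by linear_combination (e1_1 - h₂) / 2
  subst h₁ h₂
  exact ⟨by linear_combination e9_6 / 3, rfl, rfl⟩

theorem coeff_eq_of_aeval_eq {u v c : k}
    (h : MvPolynomial.aeval
        ![MvPolynomial.C u * MvPolynomial.X 0, MvPolynomial.C v * MvPolynomial.X 1] (FR k a₀ a₁ a₂)
      = MvPolynomial.C c * FR k b₀ b₁ b₂) (i j : ℕ) :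
    u ^ i * v ^ j * MvPolynomial.coeff (Finsupp.single 0 i + Finsupp.single 1 j) (FR k a₀ a₁ a₂) =
      c * MvPolynomial.coeff (Finsupp.single 0 i + Finsupp.single 1 j) (FR k b₀ b₁ b₂) := by
  rw [← MvPolynomial.coeff_aeval_C_mul_X_fin_two, h, MvPolynomial.coeff_C_mul]

theorem eq_one_of_aeval_eq [CharZero k] {u v : k} (hu : u ≠ 0) (hv : v ≠ 0)
    (h : MvPolynomial.aeval
        ![MvPolynomial.C u * MvPolynomial.X 0, MvPolynomial.C v * MvPolynomial.X 1] (FR k a₀ a₁ a₂)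
      = MvPolynomial.C (u ^ 12 * v ^ 9) * FR k b₀ b₁ b₂) :
    u = 1 ∧ v = 1 := by
  have e9_7 := coeff_eq_of_aeval_eq h 9 7
  have e11_8 := coeff_eq_of_aeval_eq h 11 8
  have e2_2 := coeff_eq_of_aeval_eq h 2 2
  rw [coeff_9_7, coeff_9_7] at e9_7
  rw [coeff_11_8, coeff_11_8] at e11_8
  rw [coeff_2_2, coeff_2_2] at e2_2
  have huv : u ^ 3 * v ^ 2 = 1 := by
    refine mul_left_cancel₀ (by simp [hu, hv] : 4 * u ^ 9 * v ^ 7 ≠ 0) ?_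
    linear_combination -e9_7
  have ha₂ : a₂ = u * v * b₂ := by
    refine mul_left_cancel₀ (by simp [hu, hv] : 3 * u ^ 11 * v ^ 8 ≠ 0) ?_
    linear_combination e11_8
  -- `u¹²v⁹ = v·(u³v²)⁴ = v` and `u³v³·b₂ = v·b₂` turn the `X²Y²` relation into `2u²v² = 2v`.
  have hu2v : u ^ 2 * v = 1 := by
    refine mul_left_cancel₀ (by simp [hv] : 2 * v ≠ 0) ?_
    linear_combination e2_2 - 3 * u ^ 2 * v ^ 2 * ha₂
      + ((2 + 3 * b₂) * v * ((u ^ 3 * v ^ 2) ^ 3 + (u ^ 3 * v ^ 2) ^ 2 + u ^ 3 * v ^ 2 + 1)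
        - 3 * b₂ * v) * huv
  have huv1 : u * v = 1 := by linear_combination huv - u * v * hu2v
  have hu1 : u = 1 := by linear_combination hu2v - u * huv1
  exact ⟨hu1, by linear_combination huv1 - v * hu1⟩

end FR

theorem stmt12_general (k : Type) [Field k] [CharZero k]
    (a₀ a₁ a₂ b₀ b₁ b₂ u v : k) (hu : u ≠ 0) (hv : v ≠ 0)
    (h : MvPolynomial.aeval
          ![MvPolynomial.C u * MvPolynomial.X 0, MvPolynomial.C v * MvPolynomial.X 1]
          (FR k a₀ a₁ a₂)
        = MvPolynomial.C (u ^ 12 * v ^ 9) * FR k b₀ b₁ b₂) :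
    u = 1 ∧ v = 1 ∧ a₀ = b₀ ∧ a₁ = b₁ ∧ a₂ = b₂ := by
  obtain ⟨rfl, rfl⟩ := FR.eq_one_of_aeval_eq hu hv h
  have hid : ![MvPolynomial.X 0, MvPolynomial.X 1] =
      (MvPolynomial.X : Fin 2 → MvPolynomial (Fin 2) k) := by
    ext1 n
    fin_cases n <;> rfl
  simp only [map_one, one_mul, one_pow, hid, MvPolynomial.aeval_X_left_apply] at h
  exact ⟨rfl, rfl, FR.params_eq_of_eq h⟩

/-- If two members of the family `{F_R}` are equivalent under a diagonal automorphism
`X ↦ uX, Y ↦ vY` in the sense `F(1,1,a;uX,vY) = u¹²v⁹·F(1,1,b;X,Y)`, then `u = v = 1`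
and the parameter triples coincide. -/
theorem stmt12 (k : Type) [Field k] [IsAlgClosed k] [CharZero k]
    (a₀ a₁ a₂ b₀ b₁ b₂ u v : k) (hu : u ≠ 0) (hv : v ≠ 0)
    (h : MvPolynomial.aeval
          ![MvPolynomial.C u * MvPolynomial.X 0, MvPolynomial.C v * MvPolynomial.X 1]
          (FR k a₀ a₁ a₂)
        = MvPolynomial.C (u ^ 12 * v ^ 9) * FR k b₀ b₁ b₂) :
    u = 1 ∧ v = 1 ∧ a₀ = b₀ ∧ a₁ = b₁ ∧ a₂ = b₂ :=
  stmt12_general k a₀ a₁ a₂ b₀ b₁ b₂ u v hu hv h
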